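/- For every β ∈ ℤ and all D₁ = (A, h), D₂ = (B, k) ∈ 𝔡, the trace cocycle of the β-twisted operators equals the residue formula: c_Lie(D₁^{(β)}, D₂^{(β)}) = Res( Tr(A·B′) + ((1−2β)/2)·(h″·Tr(B) − k″·Tr(A)) + (n·(1−6β+6β²)/12)·(h‴·k − k‴·h) ), where D^{(β)} denotes the endomorphism v ↦ A·v + h • v′ + β·h′ • v of V for D = (A, h). -/

import Mathlib

noncomputable section

abbrev K : Type := LaurentSeries ℂ

abbrev V (n : ℕ) : Type := Fin n → K

/-- The formal derivative of a Laurent series. -/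
def fd (f : K) : K :=
  ⟨fun k => ((k + 1 : ℤ) : ℂ) * f.coeff (k + 1), by
    apply Set.IsPWO.mono (f.isPWO_support.image_of_monotone
      (f := fun x => x - 1) (fun _ _ h => sub_le_sub_right h 1))
    intro k hk
    have : f.coeff (k + 1) ≠ 0 := by
      intro h
      simp [Function.mem_support, h] at hk
    exact ⟨k + 1, this, by ring⟩⟩

/-- Truncation of a Laurent series to its coefficients in negative degrees: the
projection onto `K₋` along `K₊`. -/
def tneg (f : K) : K :=
  ⟨fun k => if k < 0 then f.coeff k else 0, by
    refine f.isPWO_support.mono (fun k hk => ?_)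
    simp only [Function.mem_support] at hk ⊢
    by_cases h : k < 0
    · simpa [h] using hk
    · simp [h] at hk⟩

/-- Truncation of a Laurent series to its coefficients in non-negative degrees: the
projection onto `K₊` along `K₋`. -/
def tpos (f : K) : K :=
  ⟨fun k => if 0 ≤ k then f.coeff k else 0, by
    refine f.isPWO_support.mono (fun k hk => ?_)
    simp only [Function.mem_support] at hk ⊢
    by_cases h : (0:ℤ) ≤ k
    · simpa [h] using hk
    · simp [h] at hk⟩

/-- Componentwise projection of `V` onto `V₋` along `V₊`. -/
def projM {n : ℕ} (v : V n) : V n := fun i => tneg (v i)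

/-- Componentwise projection of `V` onto `V₊` along `V₋`. -/
def projP {n : ℕ} (v : V n) : V n := fun i => tpos (v i)

/-- The basis vector `z^m · e_i` of `V`. -/
def bas (n : ℕ) (m : ℤ) (i : Fin n) : V n :=
  fun j => if j = i then HahnSeries.single m 1 else 0

/-- `T₁^{+−} ∘ T₂^{−+} − T₂^{+−} ∘ T₁^{−+}` as a map `V₋ → V₋` (evaluated through the
projections onto `V₋` and `V₊`). -/
def commPM {n : ℕ} (T₁ T₂ : V n → V n) (v : V n) : V n :=
  projM (T₁ (projP (T₂ (projM v)))) - projM (T₂ (projP (T₁ (projM v))))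

/-- The trace cocycle `c_Lie(T₁, T₂) = Tr(T₁^{+−} T₂^{−+} − T₂^{+−} T₁^{−+})`, computed
as the (finitely supported) sum of the diagonal coefficients in the basis
`{z^m e_i : m < 0, i}` of `V₋`. -/
def cLie (n : ℕ) (T₁ T₂ : V n → V n) : ℂ :=
  ∑ᶠ (m : ℤ) (_ : m < 0) (i : Fin n), ((commPM T₁ T₂ (bas n m i)) i).coeff m


open LaurentPolynomial

/-- The ring `R = ℂ[z, z⁻¹]` of Laurent polynomials. -/
abbrev Rl : Type := LaurentPolynomial ℂ

/-- The inclusion `R = ℂ[z, z⁻¹] ⊆ K`. -/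
def toK (f : Rl) : K :=
  ⟨fun k => f.coeff k, by
    refine (f.coeff.support.finite_toSet.isPWO).mono (fun k hk => ?_)
    simpa [Finsupp.mem_support_iff] using hk⟩

/-- The residue of a Laurent series: the coefficient of `z⁻¹`. -/
def Res (f : K) : ℂ := f.coeff (-1)

/-- The `β`-twisted operator `D^{(β)} : v ↦ A·v + h • v′ + β·h′ • v` attached to a pair
`D = (A, h) ∈ 𝔡` (`A` a matrix of Laurent polynomials, `h` a Laurent polynomial). -/
def Dop (n : ℕ) (β : ℤ) (D : Matrix (Fin n) (Fin n) Rl × Rl) : V n → V n :=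
  fun v i => (∑ j, toK (D.1 i j) * v j) + toK D.2 * fd (v i) + β • (fd (toK D.2) * v i)

/-!
In the basis `z^m e_i`, the operator `D^{(β)}` sends degree `m` to degree `m + d` through the
`n × n` block `A_d + (m + β(d + 1)) h_{d+1} · 1`, which is affine in `m`. The trace of
`D₁^{+−} D₂^{−+}` therefore collects, for each offset `d > 0`, the products of blocks along the
`d` paths `m → m + d → m` with `-d ≤ m ≤ -1`; summing this quadratic polynomial in `m` gives a
closed form `residueDensity d`. Exchanging `D₁` and `D₂` turns `residueDensity d` into
`-residueDensity (-d)`, so the cocycle is the sum of `residueDensity d` over all `d ∈ ℤ`, and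
expanding the residue on the right-hand side coefficientwise yields the same sum.
-/

open Finset

@[simp] lemma coeff_toK (f : Rl) (q : ℤ) : (toK f).coeff q = f.coeff q := rfl

lemma coeff_fd (f : K) (k : ℤ) : (fd f).coeff k = ((k + 1 : ℤ) : ℂ) * f.coeff (k + 1) := rfl

lemma coeff_tneg (f : K) (k : ℤ) : (tneg f).coeff k = if k < 0 then f.coeff k else 0 := rfl

lemma coeff_tpos (f : K) (k : ℤ) : (tpos f).coeff k = if 0 ≤ k then f.coeff k else 0 := rfl

lemma fd_add (f g : K) : fd (f + g) = fd f + fd g := by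
  ext k
  simp only [coeff_fd, HahnSeries.coeff_add]
  ring

lemma fd_smul (c : ℂ) (f : K) : fd (c • f) = c • fd f := by
  ext k
  simp only [coeff_fd, HahnSeries.coeff_smul, smul_eq_mul]
  ring

@[simp] lemma fd_zero : fd 0 = 0 := by
  ext k
  simp [coeff_fd]

lemma fd_single (m : ℤ) (c : ℂ) :
    fd (HahnSeries.single m c) = HahnSeries.single (m - 1) (m * c) := by
  ext k
  simp only [coeff_fd, HahnSeries.coeff_single]
  by_cases hk : k = m - 1
  · subst hk
    simp
  · simp [hk, show k + 1 ≠ m by omega]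

-- There is no `SMulCommClass ℂ K K` instance, so `mul_smul_comm` does not apply to `K`.
lemma mul_smul_comm' (c : ℂ) (x y : K) : x * (c • y) = c • (x * y) := by
  rw [← HahnSeries.single_zero_mul_eq_smul, ← HahnSeries.single_zero_mul_eq_smul, mul_left_comm]

lemma smul_single_one (c : ℂ) (m : ℤ) :
    c • HahnSeries.single m (1 : ℂ) = HahnSeries.single m c := by
  rw [← HahnSeries.single_zero_mul_eq_smul, HahnSeries.single_mul_single, zero_add, mul_one]

lemma coeff_mul_single {R : Type*} [Semiring R] (x : LaurentSeries R) (m p : ℤ) (c : R) :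
    (x * HahnSeries.single m c).coeff p = x.coeff (p - m) * c := by
  simpa using HahnSeries.coeff_mul_single_add (x := x) (r := c) (a := p - m) (b := m)

lemma sum_single_coeff {R : Type*} [Semiring R] (y : LaurentSeries R) (s : Finset ℤ)
    (hy : ∀ q ∉ s, y.coeff q = 0) : ∑ q ∈ s, HahnSeries.single q (y.coeff q) = y := by
  ext k
  rw [HahnSeries.coeff_sum, Finset.sum_eq_single k]
  · simp
  · intro q _ hq
    simp [Ne.symm hq]
  · intro hk
    simp [hy k hk]

lemma coeff_mul_eq_sum {R : Type*} [Semiring R] (x y : LaurentSeries R) (e : ℤ ≃ ℤ)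
    (s : Finset ℤ) (hy : ∀ d ∉ s, y.coeff (e d) = 0) (a : ℤ) :
    (x * y).coeff a = ∑ d ∈ s, x.coeff (a - e d) * y.coeff (e d) := by
  have hy' : ∀ q ∉ s.map e.toEmbedding, y.coeff q = 0 := fun q hq ↦ by
    simpa using hy (e.symm q) (by simpa [Finset.mem_map_equiv] using hq)
  conv_lhs => rw [← sum_single_coeff y _ hy', Finset.mul_sum, HahnSeries.coeff_sum, Finset.sum_map]
  simp [coeff_mul_single]

lemma coeff_neg_one_mul_fd (x y : K) (e : ℤ ≃ ℤ) (S : Finset ℤ) (hx : ∀ d ∉ S, x.coeff (e d) = 0) :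
    (x * fd y).coeff (-1) = ∑ d ∈ S, -(e d : ℂ) * x.coeff (e d) * y.coeff (-e d) := by
  rw [mul_comm, coeff_mul_eq_sum _ _ e S hx]
  refine Finset.sum_congr rfl fun d _ ↦ ?_
  rw [coeff_fd, show -1 - e d + 1 = -e d by ring]
  push_cast
  ring

lemma coeff_neg_one_fd_fd_mul (x y : K) (e : ℤ ≃ ℤ) (S : Finset ℤ) (hy : ∀ d ∉ S, y.coeff (e d) = 0) :
    (fd (fd x) * y).coeff (-1) =
      ∑ d ∈ S, (e d : ℂ) * (e d - 1) * x.coeff (1 - e d) * y.coeff (e d) := by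
  rw [coeff_mul_eq_sum _ _ e S hy]
  refine Finset.sum_congr rfl fun d _ ↦ ?_
  rw [coeff_fd, coeff_fd, show -1 - e d + 1 + 1 = 1 - e d by ring]
  push_cast
  ring

lemma coeff_neg_one_fd_fd_fd_mul (x y : K) (e : ℤ ≃ ℤ) (S : Finset ℤ) (hy : ∀ d ∉ S, y.coeff (e d) = 0) :
    (fd (fd (fd x)) * y).coeff (-1) =
      ∑ d ∈ S, -((e d : ℂ) * (e d - 1) * (e d - 2)) * x.coeff (2 - e d) * y.coeff (e d) := by
  rw [coeff_mul_eq_sum _ _ e S hy]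
  refine Finset.sum_congr rfl fun d _ ↦ ?_
  rw [coeff_fd, coeff_fd, coeff_fd, show -1 - e d + 1 + 1 + 1 = 2 - e d by ring]
  push_cast
  ring

lemma sum_Icc_neg_quadratic {𝕜 : Type*} [Field 𝕜] [CharZero 𝕜] (d : ℕ) (a b c : 𝕜) :
    ∑ m ∈ Icc (-(d : ℤ)) (-1), (a + b * m + c * m ^ 2) =
      a * d - b * (d * (d + 1) / 2) + c * (d * (d + 1) * (2 * d + 1) / 6) := by
  induction d with
  | zero => simp
  | succ d ih =>
    rw [Nat.cast_succ, neg_add, ← sub_eq_add_neg,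
      ← Finset.insert_Icc_left_eq_Icc_sub_one (by omega), Finset.sum_insert (by simp), ih]
    push_cast
    ring

lemma sum_Icc_neg_eq_sum_pos_add_neg {M : Type*} [AddCommMonoid M] (L : ℕ) (f : ℤ → M) (h₀ : f 0 = 0) :
    ∑ d ∈ Icc (-(L : ℤ)) L, f d = ∑ d ∈ Icc (1 : ℤ) L, (f d + f (-d)) := by
  induction L with
  | zero => simp [h₀]
  | succ L ih =>
    rw [Nat.cast_succ, ← Finset.insert_Icc_right_eq_Icc_add_one (by omega),
      Finset.sum_insert (by simp), neg_add, ← sub_eq_add_neg,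
      ← Finset.insert_Icc_left_eq_Icc_sub_one (by omega), Finset.sum_insert (by simp),
      ← Finset.insert_Icc_right_eq_Icc_add_one (by omega), Finset.sum_insert (by simp), ih,
      neg_add', add_assoc]

lemma trace_add_smul_one_mul {ι R : Type*} [Fintype ι] [DecidableEq ι] [CommRing R]
    (X Y : Matrix ι ι R) (s t : R) :
    ((X + s • 1) * (Y + t • 1)).trace =
      (X * Y).trace + t * X.trace + s * Y.trace + Fintype.card ι * (s * t) := by
  simp only [Matrix.add_mul, Matrix.mul_add, Matrix.smul_mul, Matrix.mul_smul, Matrix.one_mul,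
    Matrix.mul_one, Matrix.trace_add, Matrix.trace_smul, Matrix.trace_one, smul_eq_mul]
  ring

section

variable {n : ℕ}

def coeffMatrix (A : Matrix (Fin n) (Fin n) Rl) (q : ℤ) : Matrix (Fin n) (Fin n) ℂ :=
  A.map fun f ↦ f.coeff q

lemma coeff_sum_toK_diag (A : Matrix (Fin n) (Fin n) Rl) (q : ℤ) :
    (∑ i, toK (A i i)).coeff q = (coeffMatrix A q).trace := by
  simp [Matrix.trace, coeffMatrix]

def CoeffsSupportedIn (N : ℕ) (D : Matrix (Fin n) (Fin n) Rl × Rl) : Prop :=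
  ∀ q ∉ Icc (-(N : ℤ)) N, coeffMatrix D.1 q = 0 ∧ D.2.coeff q = 0

lemma exists_coeffsSupportedIn (D : Matrix (Fin n) (Fin n) Rl × Rl) :
    ∃ N, CoeffsSupportedIn N D := by
  classical
  let T := (Finset.univ.biUnion fun p : Fin n × Fin n ↦ (D.1 p.1 p.2).coeff.support) ∪
    D.2.coeff.support
  obtain ⟨N, hN⟩ := (T.image Int.natAbs).exists_le
  refine ⟨N, fun q hq ↦ ?_⟩
  have hqT : q ∉ T := fun hqT ↦ hq <| by
    have := hN _ (Finset.mem_image_of_mem _ hqT)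
    rw [Finset.mem_Icc]
    omega
  simp only [T, Finset.mem_union, Finset.mem_biUnion, Finsupp.mem_support_iff, not_or,
    not_exists, not_and, not_not] at hqT
  exact ⟨Matrix.ext fun i j ↦ hqT.1 (i, j) (Finset.mem_univ _), hqT.2⟩

lemma CoeffsSupportedIn.mono {N M : ℕ} {D : Matrix (Fin n) (Fin n) Rl × Rl}
    (hD : CoeffsSupportedIn N D) (hNM : N ≤ M) : CoeffsSupportedIn M D :=
  fun q hq ↦ hD q fun hq' ↦ hq <| by simp only [Finset.mem_Icc] at hq' ⊢; omega

def dopBlock (β : ℤ) (D : Matrix (Fin n) (Fin n) Rl × Rl) (d m : ℤ) :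
    Matrix (Fin n) (Fin n) ℂ :=
  coeffMatrix D.1 d + (((m : ℂ) + β * (d + 1)) * D.2.coeff (d + 1)) • 1

lemma CoeffsSupportedIn.dopBlock_eq_zero {N : ℕ} {D : Matrix (Fin n) (Fin n) Rl × Rl}
    (hD : CoeffsSupportedIn N D) (β : ℤ) {d : ℤ} (hd : N + 1 < d) (m : ℤ) :
    dopBlock β D d m = 0 := by
  rw [dopBlock, (hD d (by simp only [Finset.mem_Icc]; omega)).1,
    (hD (d + 1) (by simp only [Finset.mem_Icc]; omega)).2]
  simp

lemma coeff_Dop_bas (β : ℤ) (D : Matrix (Fin n) (Fin n) Rl × Rl) (m p : ℤ) (i j : Fin n) :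
    ((Dop n β D (bas n m i)) j).coeff p = dopBlock β D (p - m) m j i := by
  have hsum : ∑ k, toK (D.1 j k) * bas n m i k = toK (D.1 j i) * HahnSeries.single m 1 := by
    rw [Finset.sum_eq_single i] <;> simp +contextual [bas]
  simp only [Dop, hsum, HahnSeries.coeff_add, HahnSeries.coeff_smul, coeff_mul_single, dopBlock,
    coeffMatrix, Matrix.add_apply, Matrix.map_apply, Matrix.smul_apply, Matrix.one_apply, coeff_toK]
  by_cases hj : j = i
  · subst hj
    simp only [bas, if_true, fd_single, coeff_mul_single, coeff_fd, coeff_toK]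
    push_cast
    ring_nf
  · simp [bas, hj]

def dopLinearMap (β : ℤ) (D : Matrix (Fin n) (Fin n) Rl × Rl) : V n →ₗ[ℂ] V n where
  toFun := Dop n β D
  map_add' v w := by
    funext i
    simp only [Dop, Pi.add_apply, mul_add, Finset.sum_add_distrib, fd_add, smul_add]
    abel
  map_smul' c v := by
    funext i
    simp only [Dop, Pi.smul_apply, fd_smul, mul_smul_comm', Finset.smul_sum, smul_add,
      RingHom.id_apply]
    rw [smul_comm c (β : ℤ)]

lemma sum_bas_coeff (v : V n) (s : Finset ℤ) (hv : ∀ j, ∀ p ∉ s, (v j).coeff p = 0) :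
    ∑ p ∈ s, ∑ j, (v j).coeff p • bas n p j = v := by
  funext k
  simp only [Finset.sum_apply, Pi.smul_apply, bas, smul_ite, smul_zero, smul_single_one,
    Finset.sum_ite_eq, Finset.mem_univ, if_true]
  exact sum_single_coeff (v k) s (hv k)

lemma coeff_Dop_eq_sum (β : ℤ) (D : Matrix (Fin n) (Fin n) Rl × Rl) (v : V n) (s : Finset ℤ)
    (hv : ∀ j, ∀ p ∉ s, (v j).coeff p = 0) (i : Fin n) (m : ℤ) :
    ((Dop n β D v) i).coeff m = ∑ p ∈ s, ∑ j, dopBlock β D (m - p) p i j * (v j).coeff p := by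
  conv_lhs => rw [← sum_bas_coeff v s hv]
  change ((dopLinearMap β D _) i).coeff m = _
  simp only [map_sum, map_smul, Finset.sum_apply, Pi.smul_apply, HahnSeries.coeff_sum,
    HahnSeries.coeff_smul, smul_eq_mul]
  simp only [dopLinearMap, LinearMap.coe_mk, AddHom.coe_mk, coeff_Dop_bas, mul_comm]

lemma projM_bas {m : ℤ} (hm : m < 0) (i : Fin n) : projM (bas n m i) = bas n m i := by
  funext j
  ext k
  rw [projM, coeff_tneg]
  split_ifs with hk
  · rfl
  · have : k ≠ m := by omega
    by_cases hj : j = i <;> simp [bas, hj, this]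

lemma coeff_Dop_projP_Dop_bas (β : ℤ) (D₁ D₂ : Matrix (Fin n) (Fin n) Rl × Rl) (L : ℤ)
    (hL : ∀ d m', L < d → dopBlock β D₂ d m' = 0) {m : ℤ} (hm : m < 0) (i : Fin n) :
    ((projM (Dop n β D₁ (projP (Dop n β D₂ (projM (bas n m i)))))) i).coeff m =
      ∑ d ∈ Icc (-m) L, ∑ j, dopBlock β D₁ (-d) (m + d) i j * dopBlock β D₂ d m j i := by
  set u := projP (Dop n β D₂ (bas n m i))
  have hu (j : Fin n) (p : ℤ) :
      (u j).coeff p = if 0 ≤ p then dopBlock β D₂ (p - m) m j i else 0 := by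
    simp [u, projP, coeff_tpos, coeff_Dop_bas]
  have hsupp : ∀ j, ∀ p ∉ Icc 0 (m + L), (u j).coeff p = 0 := by
    intro j p hp
    rw [Finset.mem_Icc, not_and_or, not_le, not_le] at hp
    rcases hp with hp | hp
    · simp [hu, hp]
    · simp [hu, hL (p - m) m (by omega)]
  have hIcc : Icc 0 (m + L) = (Icc (-m) L).map (addLeftEmbedding m) := by
    rw [Finset.map_add_left_Icc, add_neg_cancel]
  rw [projM_bas hm, projM, coeff_tneg, if_pos hm, coeff_Dop_eq_sum β D₁ u _ hsupp, hIcc,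
    Finset.sum_map]
  refine Finset.sum_congr rfl fun d hd ↦ Finset.sum_congr rfl fun j _ ↦ ?_
  have hmd : 0 ≤ m + d := by rw [Finset.mem_Icc] at hd; omega
  simp [hu, hmd]

lemma sum_coeff_commPM_Dop_bas (β : ℤ) (D₁ D₂ : Matrix (Fin n) (Fin n) Rl × Rl) (L : ℤ)
    (hL₁ : ∀ d m', L < d → dopBlock β D₁ d m' = 0) (hL₂ : ∀ d m', L < d → dopBlock β D₂ d m' = 0)
    {m : ℤ} (hm : m < 0) :
    ∑ i, (commPM (Dop n β D₁) (Dop n β D₂) (bas n m i) i).coeff m =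
      ∑ d ∈ Icc (-m) L, ((dopBlock β D₁ (-d) (m + d) * dopBlock β D₂ d m).trace -
        (dopBlock β D₂ (-d) (m + d) * dopBlock β D₁ d m).trace) := by
  simp only [commPM, Pi.sub_apply, HahnSeries.coeff_sub, Finset.sum_sub_distrib,
    coeff_Dop_projP_Dop_bas β _ _ L hL₁ hm, coeff_Dop_projP_Dop_bas β _ _ L hL₂ hm,
    Matrix.trace, Matrix.diag, Matrix.mul_apply]
  rw [Finset.sum_comm, Finset.sum_comm (s := Finset.univ) (t := Icc (-m) L)]

lemma cLie_eq_sum_Icc (T₁ T₂ : V n → V n) (L : ℤ)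
    (h : ∀ m < -L, ∑ i, (commPM T₁ T₂ (bas n m i) i).coeff m = 0) :
    cLie n T₁ T₂ = ∑ m ∈ Icc (-L) (-1), ∑ i, (commPM T₁ T₂ (bas n m i) i).coeff m := by
  simp only [cLie, finsum_eq_sum_of_fintype, finsum_eq_if]
  rw [finsum_eq_sum_of_support_subset _ (s := Icc (-L) (-1))]
  · refine Finset.sum_congr rfl fun m hm ↦ ?_
    rw [if_pos (by rw [Finset.mem_Icc] at hm; omega)]
  · intro m hm
    rw [Function.mem_support] at hm
    split_ifs at hm with hm0
    · rw [Finset.coe_Icc, Set.mem_Icc]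
      exact ⟨not_lt.mp fun hmL ↦ hm (h m hmL), by omega⟩
    · exact absurd rfl hm

def residueDensity (β : ℤ) (D₁ D₂ : Matrix (Fin n) (Fin n) Rl × Rl) (d : ℤ) : ℂ :=
  d * (coeffMatrix D₁.1 (-d) * coeffMatrix D₂.1 d).trace
    + (β - 1 / 2) * (d * (d + 1)) * D₂.2.coeff (d + 1) * (coeffMatrix D₁.1 (-d)).trace
    + (1 / 2 - β) * (d * (d - 1)) * D₁.2.coeff (1 - d) * (coeffMatrix D₂.1 d).trace
    - n * (1 - 6 * β + 6 * β ^ 2) / 6 * ((d - 1) * d * (d + 1)) *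
        (D₁.2.coeff (1 - d) * D₂.2.coeff (d + 1))

lemma residueDensity_zero (β : ℤ) (D₁ D₂ : Matrix (Fin n) (Fin n) Rl × Rl) :
    residueDensity β D₁ D₂ 0 = 0 := by
  simp [residueDensity]

lemma residueDensity_swap (β : ℤ) (D₁ D₂ : Matrix (Fin n) (Fin n) Rl × Rl) (d : ℤ) :
    residueDensity β D₂ D₁ d = -residueDensity β D₁ D₂ (-d) := by
  simp only [residueDensity, neg_neg, Int.cast_neg, Matrix.trace_mul_comm (coeffMatrix D₂.1 _)]
  rw [show 1 - -d = d + 1 by ring, show -d + 1 = 1 - d by ring]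
  ring

lemma sum_trace_dopBlock_mul (β : ℤ) (D₁ D₂ : Matrix (Fin n) (Fin n) Rl × Rl) (d : ℕ) :
    ∑ m ∈ Icc (-(d : ℤ)) (-1), (dopBlock β D₁ (-d) (m + d) * dopBlock β D₂ d m).trace =
      residueDensity β D₁ D₂ d := by
  set X := coeffMatrix D₁.1 (-d)
  set Y := coeffMatrix D₂.1 d
  set u := D₁.2.coeff (1 - d)
  set v := D₂.2.coeff (d + 1)
  have hquad (m : ℤ) : (dopBlock β D₁ (-d) (m + d) * dopBlock β D₂ d m).trace =
      ((X * Y).trace + β * (d + 1) * v * X.trace + (d + β * (1 - d)) * u * Y.trace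
          + n * (d + β * (1 - d)) * (β * (d + 1)) * u * v)
        + (v * X.trace + u * Y.trace + n * (d + β * (1 - d) + β * (d + 1)) * u * v) * m
        + (n * u * v) * m ^ 2 := by
    rw [dopBlock, dopBlock, trace_add_smul_one_mul, Fintype.card_fin, neg_add_eq_sub]
    push_cast
    ring
  rw [Finset.sum_congr rfl fun m _ ↦ hquad m, sum_Icc_neg_quadratic, residueDensity]
  push_cast
  ring

lemma cLie_Dop_eq_sum_residueDensity (β : ℤ) (D₁ D₂ : Matrix (Fin n) (Fin n) Rl × Rl) (L : ℕ)
    (hL₁ : ∀ d m : ℤ, L < d → dopBlock β D₁ d m = 0)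
    (hL₂ : ∀ d m : ℤ, L < d → dopBlock β D₂ d m = 0) :
    cLie n (Dop n β D₁) (Dop n β D₂) = ∑ d ∈ Icc (-(L : ℤ)) L, residueDensity β D₁ D₂ d := by
  have hdiag := fun m (hm : m < (0 : ℤ)) ↦ sum_coeff_commPM_Dop_bas β D₁ D₂ L hL₁ hL₂ hm
  rw [cLie_eq_sum_Icc _ _ L fun m hm ↦ by
      rw [hdiag m (by omega), Finset.Icc_eq_empty (by omega), Finset.sum_empty],
    Finset.sum_congr rfl fun m hm ↦ hdiag m (by rw [Finset.mem_Icc] at hm; omega),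
    Finset.sum_comm' (t' := Icc 1 (L : ℤ)) (s' := fun d ↦ Icc (-d) (-1))
      (by intro m d; simp only [Finset.mem_Icc]; omega),
    sum_Icc_neg_eq_sum_pos_add_neg L _ (residueDensity_zero β D₁ D₂)]
  refine Finset.sum_congr rfl fun d hd ↦ ?_
  lift d to ℕ using by rw [Finset.mem_Icc] at hd; omega
  rw [Finset.sum_sub_distrib, sum_trace_dopBlock_mul, sum_trace_dopBlock_mul,
    residueDensity_swap β D₁ D₂, sub_neg_eq_add]

lemma coeff_neg_one_sum_mul_fd (A B : Matrix (Fin n) (Fin n) Rl) (S : Finset ℤ)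
    (hA : ∀ d ∉ S, coeffMatrix A (-d) = 0) :
    (∑ i, ∑ j, toK (A i j) * fd (toK (B j i))).coeff (-1) =
      ∑ d ∈ S, d * (coeffMatrix A (-d) * coeffMatrix B d).trace := by
  have (i j : Fin n) : (toK (A i j) * fd (toK (B j i))).coeff (-1) =
      ∑ d ∈ S, d * (coeffMatrix A (-d) i j * coeffMatrix B d j i) := by
    rw [coeff_neg_one_mul_fd _ _ (Equiv.neg ℤ) S fun d hd ↦ by
      change coeffMatrix A (-d) i j = 0
      rw [hA d hd, Matrix.zero_apply]]
    refine Finset.sum_congr rfl fun d _ ↦ ?_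
    simp only [Equiv.neg_apply, coeff_toK, neg_neg, Int.cast_neg, coeffMatrix, Matrix.map_apply]
    ring
  simp only [HahnSeries.coeff_sum, this, Matrix.trace, Matrix.diag, Matrix.mul_apply,
    Finset.mul_sum]
  simp_rw [Finset.sum_comm (s := S)]

lemma res_eq_sum_residueDensity (β : ℤ) (D₁ D₂ : Matrix (Fin n) (Fin n) Rl × Rl) {N L : ℕ}
    (h₁ : CoeffsSupportedIn N D₁) (h₂ : CoeffsSupportedIn N D₂) (hNL : N < L) :
    Res ((∑ i, ∑ j, toK (D₁.1 i j) * fd (toK (D₂.1 j i)))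
        + (((1 : ℂ) - 2 * (β : ℂ)) / 2) •
            (fd (fd (toK D₁.2)) * (∑ i, toK (D₂.1 i i))
              - fd (fd (toK D₂.2)) * (∑ i, toK (D₁.1 i i)))
        + (((n : ℂ) * (1 - 6 * (β : ℂ) + 6 * (β : ℂ) ^ 2)) / 12) •
            (fd (fd (fd (toK D₁.2))) * toK D₂.2
              - fd (fd (fd (toK D₂.2))) * toK D₁.2)) =
      ∑ d ∈ Icc (-(L : ℤ)) L, residueDensity β D₁ D₂ d := by
  set S := Icc (-(L : ℤ)) L
  have hfar {d : ℤ} (hd : d ∉ S) {q : ℤ} (hq : d - 1 ≤ q ∧ q ≤ d + 1 ∨ -d - 1 ≤ q ∧ q ≤ 1 - d) :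
      q ∉ Icc (-(N : ℤ)) N := by
    simp only [S, Finset.mem_Icc] at hd ⊢
    omega
  rw [Res, HahnSeries.coeff_add, HahnSeries.coeff_add, HahnSeries.coeff_smul,
    HahnSeries.coeff_smul, HahnSeries.coeff_sub, HahnSeries.coeff_sub,
    coeff_neg_one_sum_mul_fd _ _ S fun d hd ↦ (h₁ (-d) (hfar hd (by omega))).1,
    coeff_neg_one_fd_fd_mul _ _ (Equiv.refl ℤ) S fun d hd ↦ by
      rw [Equiv.refl_apply, coeff_sum_toK_diag, (h₂ d (hfar hd (by omega))).1, Matrix.trace_zero],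
    coeff_neg_one_fd_fd_mul _ _ (Equiv.neg ℤ) S fun d hd ↦ by
      rw [Equiv.neg_apply, coeff_sum_toK_diag, (h₁ (-d) (hfar hd (by omega))).1,
        Matrix.trace_zero],
    coeff_neg_one_fd_fd_fd_mul _ _ (Equiv.addRight 1) S fun d hd ↦ (h₂ (d + 1) (hfar hd (by omega))).2,
    coeff_neg_one_fd_fd_fd_mul _ _ (Equiv.subLeft 1) S fun d hd ↦ (h₁ (1 - d) (hfar hd (by omega))).2]
  simp only [smul_eq_mul, ← Finset.sum_sub_distrib, Finset.mul_sum, ← Finset.sum_add_distrib]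
  refine Finset.sum_congr rfl fun d _ ↦ ?_
  simp only [residueDensity, Equiv.refl_apply, Equiv.neg_apply, Equiv.coe_addRight,
    Equiv.subLeft_apply, coeff_toK, coeff_sum_toK_diag]
  push_cast
  ring_nf

end

theorem cLie_eq_residue_formula_general (n : ℕ) (β : ℤ)
    (D₁ D₂ : Matrix (Fin n) (Fin n) Rl × Rl) :
    cLie n (Dop n β D₁) (Dop n β D₂) =
      Res ((∑ i, ∑ j, toK (D₁.1 i j) * fd (toK (D₂.1 j i)))
        + (((1 : ℂ) - 2 * (β : ℂ)) / 2) •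
            (fd (fd (toK D₁.2)) * (∑ i, toK (D₂.1 i i))
              - fd (fd (toK D₂.2)) * (∑ i, toK (D₁.1 i i)))
        + (((n : ℂ) * (1 - 6 * (β : ℂ) + 6 * (β : ℂ) ^ 2)) / 12) •
            (fd (fd (fd (toK D₁.2))) * toK D₂.2
              - fd (fd (fd (toK D₂.2))) * toK D₁.2)) := by
  obtain ⟨N₁, h₁⟩ := exists_coeffsSupportedIn D₁
  obtain ⟨N₂, h₂⟩ := exists_coeffsSupportedIn D₂
  replace h₁ := h₁.mono (le_max_left N₁ N₂)
  replace h₂ := h₂.mono (le_max_right N₁ N₂)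
  rw [cLie_Dop_eq_sum_residueDensity β D₁ D₂ (max N₁ N₂ + 1)
      (fun d m hd ↦ h₁.dopBlock_eq_zero β (by omega) m)
      (fun d m hd ↦ h₂.dopBlock_eq_zero β (by omega) m),
    res_eq_sum_residueDensity β D₁ D₂ h₁ h₂ (Nat.lt_succ_self _)]

/-- The trace cocycle of two `β`-twisted first-order operators is given by the residue
formula
`c_Lie(D₁^{(β)}, D₂^{(β)}) = Res( Tr(A·B′) + ((1−2β)/2)(h″·Tr B − k″·Tr A) + (n(1−6β+6β²)/12)(h‴k − k‴h) )`. -/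
theorem cLie_eq_residue_formula (n : ℕ) (hn : 1 ≤ n) (β : ℤ)
    (D₁ D₂ : Matrix (Fin n) (Fin n) Rl × Rl) :
    cLie n (Dop n β D₁) (Dop n β D₂) =
      Res ((∑ i, ∑ j, toK (D₁.1 i j) * fd (toK (D₂.1 j i)))
        + (((1 : ℂ) - 2 * (β : ℂ)) / 2) •
            (fd (fd (toK D₁.2)) * (∑ i, toK (D₂.1 i i))
              - fd (fd (toK D₂.2)) * (∑ i, toK (D₁.1 i i)))
        + (((n : ℂ) * (1 - 6 * (β : ℂ) + 6 * (β : ℂ) ^ 2)) / 12) •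
            (fd (fd (fd (toK D₁.2))) * toK D₂.2
              - fd (fd (fd (toK D₂.2))) * toK D₁.2)) :=
  cLie_eq_residue_formula_general n β D₁ D₂

end
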